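/- Let κ be an uncountable cardinal with κ = κ^{<κ}. If S ⊆ κ^{<κ} is a κ-Miller tree, then [S] is a closed subset of κ^κ homeomorphic to κ^κ. -/

import Mathlib

open Cardinal Set Topology

universe u

/-- The bounded topology on `K → Y`: basic open sets are determined by an
initial segment of values. -/
def bTop (K : Type u) [LinearOrder K] (Y : Type u) : TopologicalSpace (K → Y) :=
  TopologicalSpace.generateFrom
    {U | ∃ (b : K) (s : K → Y), U = {x | ∀ i, i < b → x i = s i}}

/-- `A` is κ-compact: every open cover (for the bounded topology) has a
subcover of size `< #K`. -/
def KCompact (K : Type u) [LinearOrder K] {Y : Type u} (A : Set (K → Y)) : Prop :=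
  ∀ 𝒰 : Set (Set (K → Y)), (∀ U ∈ 𝒰, IsOpen[bTop K Y] U) → A ⊆ ⋃₀ 𝒰 →
    ∃ 𝒱 ⊆ 𝒰, #𝒱 < #K ∧ A ⊆ ⋃₀ 𝒱

/-- `B` is a `K_κ` subset: a union of κ-many κ-compact sets. -/
def IsKK (K : Type u) [LinearOrder K] (B : Set (K → K)) : Prop :=
  ∃ C : K → Set (K → K), (∀ b, KCompact K (C b)) ∧ B = ⋃ b, C b

/-- Nodes of the tree `Y^{<K}`: sequences of length `b`, for `b : K`. -/
abbrev Nd (K : Type u) [LinearOrder K] (Y : Type u) := Σ b : K, (Set.Iio b → Y)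

/-- Restriction of a node to a smaller length. -/
def ndRes (K : Type u) [LinearOrder K] {Y : Type u} (p : Nd K Y) (c : K) (h : c ≤ p.1) :
    Nd K Y :=
  ⟨c, fun i => p.2 ⟨i.1, lt_of_lt_of_le i.2 h⟩⟩

/-- Restriction of a branch `x : K → Y` to length `b`. -/
def xRes (K : Type u) [LinearOrder K] {Y : Type u} (x : K → Y) (b : K) : Nd K Y :=
  ⟨b, fun i => x i.1⟩

/-- `q` extends `p` as a sequence. -/
def NdExt (K : Type u) [LinearOrder K] {Y : Type u} (q p : Nd K Y) : Prop :=
  ∃ h : p.1 ≤ q.1, ∀ i : Set.Iio p.1, q.2 ⟨i.1, lt_of_lt_of_le i.2 h⟩ = p.2 i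

/-- A subtree of `Y^{<K}`: a set of nodes closed under restriction. -/
def IsSubtree (K : Type u) [LinearOrder K] {Y : Type u} (T : Set (Nd K Y)) : Prop :=
  ∀ p ∈ T, ∀ c, ∀ h : c ≤ p.1, ndRes K p c h ∈ T

/-- The body `[T]`: the set of `K`-branches through `T`. -/
def body (K : Type u) [LinearOrder K] {Y : Type u} (T : Set (Nd K Y)) : Set (K → Y) :=
  {x | ∀ b : K, xRes K x b ∈ T}

/-- `T` is pruned: every node is extended by a branch. -/
def Pruned (K : Type u) [LinearOrder K] {Y : Type u} (T : Set (Nd K Y)) : Prop :=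
  ∀ p ∈ T, ∃ x ∈ body K T, NdExt K (xRes K x p.1) p

/-- `b` is a limit element: not least, and with no immediate predecessor. -/
def IsLimElt (K : Type u) [LinearOrder K] (b : K) : Prop :=
  (∃ c, c < b) ∧ ∀ c, c < b → ∃ d, c < d ∧ d < b

/-- Superclosed: closed under unions of increasing sequences of length `< K`. -/
def Superclosed (K : Type u) [LinearOrder K] {Y : Type u} (T : Set (Nd K Y)) : Prop :=
  ∀ p : Nd K Y, IsLimElt K p.1 → (∀ c, ∀ h : c < p.1, ndRes K p c h.le ∈ T) → p ∈ T

/-- The values at position `p.1` realized by extensions of `p` in `T`, i.e. the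
immediate successors of `p` in `T`. -/
def splitVals (K : Type u) [LinearOrder K] {Y : Type u} (T : Set (Nd K Y)) (p : Nd K Y) :
    Set Y :=
  {a | ∃ q ∈ T, ∃ h : p.1 < q.1,
    (∀ i : Set.Iio p.1, q.2 ⟨i.1, i.2.trans h⟩ = p.2 i) ∧ q.2 ⟨p.1, h⟩ = a}

/-- A perfect tree: a nonempty superclosed subtree in which every node is
extended by a 2-splitting node. -/
def PerfectTree (K : Type u) [LinearOrder K] (T : Set (Nd K K)) : Prop :=
  T.Nonempty ∧ IsSubtree K T ∧ Superclosed K T ∧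
    ∀ p ∈ T, ∃ q ∈ T, NdExt K q p ∧
      ∃ a ∈ splitVals K T q, ∃ a' ∈ splitVals K T q, a ≠ a'

/-- A κ-Miller tree: a nonempty superclosed subtree in which every node is
extended by a κ-splitting node. -/
def MillerTree (K : Type u) [LinearOrder K] (T : Set (Nd K K)) : Prop :=
  T.Nonempty ∧ IsSubtree K T ∧ Superclosed K T ∧
    ∀ p ∈ T, ∃ q ∈ T, NdExt K q p ∧ #K ≤ #(splitVals K T q)

/-- A κ-tree: a subtree of height `K` all of whose levels have size `< #K`. -/
def KTree (K : Type u) [LinearOrder K] {Y : Type u} (T : Set (Nd K Y)) : Prop :=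
  (∀ b : K, ∃ t : Set.Iio b → Y, (⟨b, t⟩ : Nd K Y) ∈ T) ∧
    ∀ b : K, #{t : Set.Iio b → Y | (⟨b, t⟩ : Nd K Y) ∈ T} < #K

/-- A κ-Aronszajn tree: a κ-tree with no branch. -/
def Aronszajn (K : Type u) [LinearOrder K] (S : Set (Nd K K)) : Prop :=
  IsSubtree K S ∧ KTree K S ∧ body K S = ∅

/-- The tree property for `K`: every κ-tree has a branch. -/
def TreeProp (K : Type u) [LinearOrder K] : Prop :=
  ∀ T : Set (Nd K K), IsSubtree K T → KTree K T → (body K T).Nonempty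

/-- weak compactness: inaccessibility together with the tree property. -/
def WComp (K : Type u) [LinearOrder K] : Prop :=
  (#K).IsInaccessible ∧ TreeProp K

/-- `C` is homeomorphic to the generalized Baire space `K → K`. -/
def HomeoToBaire (K : Type u) [LinearOrder K] (C : Set (K → K)) : Prop :=
  letI := bTop K K
  Nonempty (↥C ≃ₜ (K → K))

/-- `C` is homeomorphic to the generalized Cantor space `K → ULift.{u} Bool`. -/
def HomeoToCantor (K : Type u) [LinearOrder K] (C : Set (K → K)) : Prop :=
  letI := bTop K K
  letI : TopologicalSpace (K → ULift.{u} Bool) := bTop K (ULift.{u} Bool)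
  Nonempty (↥C ≃ₜ (K → ULift.{u} Bool))

/-- The Hurewicz dichotomy for `A`. -/
def HD (K : Type u) [LinearOrder K] (A : Set (K → K)) : Prop :=
  (∃ B, IsKK K B ∧ A ⊆ B) ∨
    ∃ C ⊆ A, IsClosed[bTop K K] C ∧ HomeoToBaire K C

/-- The Miller-tree Hurewicz dichotomy for `A`. -/
def MillerHD (K : Type u) [LinearOrder K] (A : Set (K → K)) : Prop :=
  (∃ B, IsKK K B ∧ A ⊆ B) ∨ ∃ T, MillerTree K T ∧ body K T ⊆ A

/-- Σ¹₁ subsets of `K → K`: projections of closed subsets of the product. -/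
def Sigma11 (K : Type u) [LinearOrder K] (A : Set (K → K)) : Prop :=
  letI := bTop K K
  ∃ C : Set ((K → K) × (K → K)), IsClosed C ∧ A = Prod.fst '' C

/-- The κ-perfect set property. -/
def PSP (K : Type u) [LinearOrder K] (A : Set (K → K)) : Prop :=
  #A ≤ #K ∨ ∃ C ⊆ A, IsClosed[bTop K K] C ∧ HomeoToCantor K C

/-- `A ⊆ K → K` is bounded. -/
def BddSet (K : Type u) [LinearOrder K] (A : Set (K → K)) : Prop :=
  ∃ x : K → K, ∀ y ∈ A, ∀ i, y i ≤ x i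

/-- `A ⊆ K → K` is eventually bounded. -/
def EvBddSet (K : Type u) [LinearOrder K] (A : Set (K → K)) : Prop :=
  ∃ x : K → K, ∀ y ∈ A, ∃ b : K, ∀ i, b ≤ i → y i ≤ x i

/-- Nodes of the product tree `K^{<K} × K^{<K}` (pairs of equal length). -/
abbrev PNd (K : Type u) [LinearOrder K] := Σ b : K, (Set.Iio b → K) × (Set.Iio b → K)

/-- Subtree of the product tree: closed under simultaneous restriction. -/
def IsPSubtree (K : Type u) [LinearOrder K] (T : Set (PNd K)) : Prop :=
  ∀ p ∈ T, ∀ c, ∀ h : c ≤ p.1,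
    (⟨c, fun i => p.2.1 ⟨i.1, lt_of_lt_of_le i.2 h⟩,
        fun i => p.2.2 ⟨i.1, lt_of_lt_of_le i.2 h⟩⟩ : PNd K) ∈ T

/-- The projection `p[T]` of the set of branches of a product tree to the first
coordinate. -/
def pProj (K : Type u) [LinearOrder K] (T : Set (PNd K)) : Set (K → K) :=
  {x | ∃ y : K → K, ∀ b : K,
    (⟨b, fun i => x i.1, fun i => y i.1⟩ : PNd K) ∈ T}

/-- An `∃^x`-perfect embedding into a product tree `T`. -/
def PerfEmb (K : Type u) [LinearOrder K] (T : Set (PNd K)) (e : Nd K (ULift.{u} Bool) → PNd K) : Prop :=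
  (∀ u, e u ∈ T) ∧
  (∀ u u' : Nd K (ULift.{u} Bool), ∀ h : u.1 < u'.1,
     (∀ i : Set.Iio u.1, u'.2 ⟨i.1, i.2.trans h⟩ = u.2 i) →
     ∃ h' : (e u).1 < (e u').1,
       (∀ i : Set.Iio (e u).1, (e u').2.1 ⟨i.1, i.2.trans h'⟩ = (e u).2.1 i) ∧
       (∀ i : Set.Iio (e u).1, (e u').2.2 ⟨i.1, i.2.trans h'⟩ = (e u).2.2 i)) ∧
  (∀ u u' : Nd K (ULift.{u} Bool), ¬ NdExt K u u' → ¬ NdExt K u' u →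
     ¬ NdExt K ⟨(e u).1, (e u).2.1⟩ ⟨(e u').1, (e u').2.1⟩ ∧
     ¬ NdExt K ⟨(e u').1, (e u').2.1⟩ ⟨(e u).1, (e u).2.1⟩) ∧
  (∀ u : Nd K (ULift.{u} Bool), IsLimElt K u.1 → ∀ d, d < (e u).1 →
     ∃ c, ∃ h : c < u.1, d < (e (ndRes K u c h.le)).1)

/-- The immediate extension `u⌢⟨a⟩` of a node `u` by a value `a`. -/
def extNd (K : Type u) [LinearOrder K] [SuccOrder K] (u : Nd K K) (a : K) : Nd K K :=
  ⟨Order.succ u.1, fun i => if h : i.1 < u.1 then u.2 ⟨i.1, h⟩ else a⟩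

/-- An `∃^x`-superperfect embedding into a product tree `T`. -/
def SuperPerfEmb (K : Type u) [LinearOrder K] [SuccOrder K] (T : Set (PNd K))
    (e : Nd K K → PNd K) : Prop :=
  (∀ u, e u ∈ T) ∧
  (∀ u u' : Nd K K, ∀ h : u.1 < u'.1,
     (∀ i : Set.Iio u.1, u'.2 ⟨i.1, i.2.trans h⟩ = u.2 i) →
     ∃ h' : (e u).1 < (e u').1,
       (∀ i : Set.Iio (e u).1, (e u').2.1 ⟨i.1, i.2.trans h'⟩ = (e u).2.1 i) ∧
       (∀ i : Set.Iio (e u).1, (e u').2.2 ⟨i.1, i.2.trans h'⟩ = (e u).2.2 i)) ∧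
  (∀ u : Nd K K, IsLimElt K u.1 → ∀ d, d < (e u).1 →
     ∃ c, ∃ h : c < u.1, d < (e (ndRes K u c h.le)).1) ∧
  (∀ u : Nd K K, ∃ γ : K, (e u).1 ≤ γ ∧
     ∃ hlen : ∀ a : K, γ < (e (extNd K u a)).1,
       ∀ a b : K, a ≠ b →
         (∀ i : Set.Iio γ,
           (e (extNd K u a)).2.1 ⟨i.1, i.2.trans (hlen a)⟩ =
           (e (extNd K u b)).2.1 ⟨i.1, i.2.trans (hlen b)⟩) ∧
         (e (extNd K u a)).2.1 ⟨γ, hlen a⟩ ≠ (e (extNd K u b)).2.1 ⟨γ, hlen b⟩)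

/-!
A splitting node `y↾c` above a node of `S` cuts the branches through that node into `#K`
clopen pieces: a branch either leaves the stem `y↾c` at some level below `c`, or follows it and
then takes one of the `#K` immediate successors of `y↾c`. Enumerating the pieces by `K` and
refining in this way at successor stages, while taking unions at limit stages (they stay in `S`
because `S` is superclosed, and are bounded because `#K` is regular, which follows from
`#K ^< #K = #K` by König's theorem), each `u : K → K` determines a branch of `S`, and every
branch arises from exactly one `u`. As `u↾b` determines a node of the branch, and a long enough
node of the branch determines `u↾b`, this is a homeomorphism from `K → K` onto `[S]`.
-/

open Function Order

local instance {K Y : Type u} [LinearOrder K] : TopologicalSpace (K → Y) := bTop K Y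

theorem Cardinal.isRegular_of_powerlt_self {c : Cardinal} (hc : ℵ₀ ≤ c) (h : c ^< c = c) :
    c.IsRegular :=
  ⟨hc, le_of_not_gt fun hcof => (lt_power_cof_ord hc).trans_le (le_powerlt c hcof) |>.ne h.symm⟩

section Cardinality

variable {K : Type u} [LinearOrder K]

theorem noMaxOrder_of_mk_Iio_lt (hK : ℵ₀ ≤ #K) (hseg : ∀ b : K, #(Iio b) < #K) :
    NoMaxOrder K := by
  refine ⟨fun b => ?_⟩
  by_contra! hb
  have hIic : Iic b = Set.univ := eq_univ_of_forall hb
  have : #K ≤ #(Iio b) + 1 := by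
    rw [← mk_univ, ← hIic, ← Iio_insert]
    exact mk_insert_le
  exact this.not_gt (add_lt_of_lt hK (hseg b) (one_lt_aleph0.trans_le hK))

theorem mk_Iic_lt [NoMaxOrder K] (hseg : ∀ b : K, #(Iio b) < #K) (a : K) : #(Iic a) < #K :=
  let ⟨c, hc⟩ := exists_gt a
  (mk_le_mk_of_subset (Iic_subset_Iio.2 hc)).trans_lt (hseg c)

theorem bddAbove_of_mk_lt [NoMaxOrder K] (hreg : (#K).IsRegular)
    (hseg : ∀ b : K, #(Iio b) < #K) {A : Set K} (hA : #A < #K) : BddAbove A := by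
  by_contra hA'
  have hcover : ⋃ a ∈ A, Iic a = Set.univ := eq_univ_of_forall fun x =>
    let ⟨a, ha, hxa⟩ := not_bddAbove_iff.1 hA' x
    mem_biUnion ha hxa.le
  have := (card_biUnion_lt_iff_forall_of_isRegular hreg hA).2 fun a _ => mk_Iic_lt hseg a
  rw [hcover, mk_univ] at this
  exact this.false

end Cardinality

section BoundedTopology

variable {K Y : Type u} [LinearOrder K]

theorem eventually_eqOn_Iio (x : K → Y) (b : K) : ∀ᶠ y in 𝓝 x, EqOn y x (Iio b) := by
  have : IsOpen {y : K → Y | EqOn y x (Iio b)} :=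
    TopologicalSpace.isOpen_generateFrom_of_mem ⟨b, x, rfl⟩
  exact this.mem_nhds fun _ _ => rfl

theorem continuous_bTop_of_eventually_eqOn {X : Type*} [TopologicalSpace X] {f : X → K → Y}
    (hf : ∀ x b, ∀ᶠ x' in 𝓝 x, EqOn (f x') (f x) (Iio b)) : Continuous f := by
  refine continuous_generateFrom_iff.2 ?_
  rintro _ ⟨b, s, rfl⟩
  refine isOpen_iff_eventually.2 fun x hx => (hf x b).mono fun x' hx' i hi => ?_
  exact (hx' hi).trans (hx i hi)

theorem xRes_congr {x y : K → Y} {b : K} (h : EqOn x y (Iio b)) : xRes K x b = xRes K y b :=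
  congrArg (Sigma.mk b) (funext fun i => h i.2)

theorem isClosed_body (S : Set (Nd K Y)) : IsClosed (body K S) := by
  refine isOpen_compl_iff.1 (isOpen_iff_eventually.2 fun x hx => ?_)
  obtain ⟨b, hb⟩ := not_forall.1 hx
  exact (eventually_eqOn_Iio x b).mono fun y hy hyS => hb (xRes_congr hy ▸ hyS b)

end BoundedTopology

section Departures

variable {K : Type u} [LinearOrder K]

theorem eqOn_update_Iio (y : K → K) (c a : K) : EqOn (update y c a) y (Iio c) :=
  fun _ hi => update_of_ne hi.ne _ _

variable [SuccOrder K] (S : Set (Nd K K))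

def succVals (y : K → K) (c : K) : Set K := {a | xRes K (update y c a) (succ c) ∈ S}

variable {S}

theorem eqOn_update_Iio_succ [NoMaxOrder K] {w y : K → K} {c : K} (h : EqOn w y (Iio c)) :
    EqOn w (update y c (w c)) (Iio (succ c)) := by
  intro i hi
  rcases (lt_succ_iff.1 hi).lt_or_eq with hic | rfl
  · rw [update_of_ne hic.ne]; exact h hic
  · rw [update_self]

theorem MillerTree.exists_succVals [NoMaxOrder K] (hS : MillerTree K S) {z : K → K} {l : K}
    (hz : xRes K z l ∈ S) : ∃ c y, l ≤ c ∧ EqOn y z (Iio l) ∧ #K ≤ #(succVals S y c) := by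
  obtain ⟨q, -, ⟨hlq, hqz⟩, hsplit⟩ := hS.2.2.2 _ hz
  let y : K → K := fun i => if hi : i < q.1 then q.2 ⟨i, hi⟩ else z i
  have hyq : ∀ i (hi : i < q.1), y i = q.2 ⟨i, hi⟩ := fun i hi => dif_pos hi
  refine ⟨q.1, y, hlq, fun i hi => (hyq i (hi.trans_le hlq)).trans (hqz ⟨i, hi⟩),
    hsplit.trans (mk_le_mk_of_subset ?_)⟩
  rintro _ ⟨q', hq', hlt, hq'q, rfl⟩
  show xRes K (update y q.1 _) (succ q.1) ∈ S
  convert hS.2.1 q' hq' (succ q.1) (succ_le_of_lt hlt) using 1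
  refine congrArg (Sigma.mk _) (funext fun ⟨i, hi⟩ => ?_)
  rcases (lt_succ_iff.1 hi).lt_or_eq with hiq | rfl
  · rw [update_of_ne hiq.ne, hyq i hiq]; exact (hq'q ⟨i, hiq⟩).symm
  · exact update_self ..

variable (S) in
/-- The places `(i, a)` where a branch through `y↾l` can leave the stem `y↾c`: at some
`l ≤ i < c` with a value `a ≠ y i`, or at the splitting node `y↾c` itself with any `a`. -/
def departures (l c : K) (y : K → K) : Set (K × K) :=
  {d | l ≤ d.1 ∧ d.1 ≤ c ∧ (d.1 < c → d.2 ≠ y d.1) ∧ xRes K (update y d.1 d.2) (succ d.1) ∈ S}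

theorem mk_departures {l c : K} {y : K → K} (hK : ℵ₀ ≤ #K) (hlc : l ≤ c)
    (hsplit : #K ≤ #(succVals S y c)) : #(departures S l c y) = #K := by
  refine le_antisymm ?_ ?_
  · calc #(departures S l c y) ≤ #(K × K) := mk_set_le _
      _ = #K := by rw [mk_prod, lift_id, mul_eq_self hK]
  · refine hsplit.trans ?_
    rw [← mk_image_eq (Prod.mk_right_injective c)]
    refine mk_le_mk_of_subset ?_
    rintro _ ⟨a, ha, rfl⟩
    exact ⟨hlc, le_rfl, fun h => absurd h (lt_irrefl c), ha⟩

theorem eq_of_eqOn_departures [NoMaxOrder K] {l c : K} {y w : K → K} {d d' : K × K}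
    (hd : d ∈ departures S l c y) (hd' : d' ∈ departures S l c y)
    (hw : EqOn w (update y d.1 d.2) (Iio (succ d.1)))
    (hw' : EqOn w (update y d'.1 d'.2) (Iio (succ d'.1))) : d = d' := by
  wlog hle : d.1 ≤ d'.1 generalizing d d'
  · exact (this hd' hd hw' hw (le_of_not_ge hle)).symm
  have hwd : w d.1 = d.2 := (hw (lt_succ d.1)).trans (update_self ..)
  rcases hle.lt_or_eq with hlt | heq
  · -- a branch through `d'` follows the stem at `d.1`, where `d` leaves it
    have : w d.1 = y d.1 := (hw' (hlt.trans (lt_succ _))).trans (update_of_ne hlt.ne ..)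
    exact absurd (hwd.symm.trans this) (hd.2.2.1 (hlt.trans_le hd'.2.1))
  · have hwd' : w d'.1 = d'.2 := (hw' (lt_succ d'.1)).trans (update_self ..)
    exact Prod.ext heq (hwd.symm.trans (heq ▸ hwd'))

theorem exists_departure_eqOn [NoMaxOrder K] [WellFoundedLT K] {l c : K} {y w : K → K}
    (hw : w ∈ body K S) (hlc : l ≤ c) (hwy : EqOn w y (Iio l)) :
    ∃ d ∈ departures S l c y, EqOn w (update y d.1 d.2) (Iio (succ d.1)) := by
  obtain ⟨i, ⟨hli, hi⟩, hmin⟩ :=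
    wellFounded_lt.has_min {i | l ≤ i ∧ (i = c ∨ w i ≠ y i)} ⟨c, hlc, Or.inl rfl⟩
  have hic : i ≤ c := le_of_not_gt fun h => hmin c ⟨hlc, Or.inl rfl⟩ h
  have hwi : EqOn w y (Iio i) := fun j hj => by
    by_contra hne
    rcases lt_or_ge j l with hjl | hlj
    · exact hne (hwy hjl)
    · exact hmin j ⟨hlj, Or.inr hne⟩ hj
  have hw' := eqOn_update_Iio_succ hwi
  refine ⟨(i, w i), ⟨hli, hic, fun h => hi.resolve_left h.ne, ?_⟩, hw'⟩
  exact xRes_congr hw' ▸ hw (succ i)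

end Departures

section Step

variable {K : Type u} [LinearOrder K]

/-- A pair `p : K × (K → K)` stands for the node `p.2↾p.1`. -/
def PassesThrough (w : K → K) (p : K × (K → K)) : Prop := EqOn w p.2 (Iio p.1)

def ProperlyExtends (p q : K × (K → K)) : Prop := q.1 < p.1 ∧ EqOn p.2 q.2 (Iio q.1)

theorem ProperlyExtends.trans {p q r : K × (K → K)} (hpq : ProperlyExtends p q)
    (hqr : ProperlyExtends q r) : ProperlyExtends p r :=
  ⟨hqr.1.trans hpq.1, fun _ hi => (hpq.2 (hi.trans hqr.1)).trans (hqr.2 hi)⟩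

variable [SuccOrder K] {S : Set (Nd K K)}

variable (S) in
def IsSplittingStem (l : K) (z : K → K) (p : K × (K → K)) : Prop :=
  l ≤ p.1 ∧ EqOn p.2 z (Iio l) ∧ Nonempty (K ≃ departures S l p.1 p.2)

theorem MillerTree.exists_isSplittingStem [NoMaxOrder K] (hS : MillerTree K S) (hK : ℵ₀ ≤ #K)
    {l : K} {z : K → K} (hz : xRes K z l ∈ S) : ∃ p, IsSplittingStem S l z p :=
  let ⟨c, y, hlc, hyz, hsplit⟩ := hS.exists_succVals hz
  ⟨(c, y), hlc, hyz, Cardinal.eq.1 (mk_departures hK hlc hsplit).symm⟩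

variable (S) in
open Classical in
/-- The `a`-th of the `#K` pieces into which the departures of a splitting stem cut the cone
above `z↾l`. -/
noncomputable def branchStep (l : K) (z : K → K) (a : K) : K × (K → K) :=
  if h : ∃ p, IsSplittingStem S l z p then
    let d : K × K := h.choose_spec.2.2.some a
    (succ d.1, update h.choose.2 d.1 d.2)
  else (succ l, z)

variable {l : K} {z : K → K}

theorem branchStep_eq (h : ∃ p, IsSplittingStem S l z p) :
    ∃ p, IsSplittingStem S l z p ∧ ∃ e : K ≃ departures S l p.1 p.2,
      ∀ a, branchStep S l z a = (succ (e a).1.1, update p.2 (e a).1.1 (e a).1.2) :=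
  ⟨h.choose, h.choose_spec, h.choose_spec.2.2.some, fun _ => dif_pos h⟩

theorem branchStep_mem (h : ∃ p, IsSplittingStem S l z p) (a : K) :
    xRes K (branchStep S l z a).2 (branchStep S l z a).1 ∈ S := by
  obtain ⟨p, -, e, he⟩ := branchStep_eq h
  rw [he a]
  exact (e a).2.2.2.2

variable [NoMaxOrder K]

theorem branchStep_properlyExtends (a : K) : ProperlyExtends (branchStep S l z a) (l, z) := by
  by_cases h : ∃ p, IsSplittingStem S l z p
  · obtain ⟨p, ⟨-, hpz, -⟩, e, he⟩ := branchStep_eq h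
    have hld : l ≤ (e a).1.1 := (e a).2.1
    rw [he a]
    exact ⟨hld.trans_lt (lt_succ _), fun i hi =>
      (eqOn_update_Iio p.2 _ _ (hi.trans_le hld)).trans (hpz hi)⟩
  · rw [branchStep, dif_neg h]
    exact ⟨lt_succ l, eqOn_refl _ _⟩

theorem eq_of_passesThrough_branchStep (h : ∃ p, IsSplittingStem S l z p) {w : K → K}
    {a a' : K} (ha : PassesThrough w (branchStep S l z a))
    (ha' : PassesThrough w (branchStep S l z a')) : a = a' := by
  obtain ⟨p, -, e, he⟩ := branchStep_eq h
  rw [he] at ha ha'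
  exact e.injective (Subtype.ext (eq_of_eqOn_departures (e a).2 (e a').2 ha ha'))

theorem exists_passesThrough_branchStep [WellFoundedLT K] (h : ∃ p, IsSplittingStem S l z p)
    {w : K → K} (hw : w ∈ body K S) (hwz : EqOn w z (Iio l)) :
    ∃ a, PassesThrough w (branchStep S l z a) := by
  obtain ⟨p, ⟨hlp, hpz, -⟩, e, he⟩ := branchStep_eq h
  obtain ⟨d, hd, hwd⟩ := exists_departure_eqOn hw hlp fun _ hi => (hwz hi).trans (hpz hi).symm
  refine ⟨e.symm ⟨d, hd⟩, ?_⟩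
  rw [he, Equiv.apply_symm_apply]
  exact hwd

end Step

section Chains

variable {K : Type u} [LinearOrder K] {ι : Type*}

def IsNodeChain [LT ι] (f : ι → K × (K → K)) : Prop :=
  ∀ ⦃j j'⦄, j < j' → ProperlyExtends (f j') (f j)

theorem IsNodeChain.apply_eq [LinearOrder ι] {f : ι → K × (K → K)} (hf : IsNodeChain f)
    {j j' : ι} {i : K} (hi : i < (f j).1) (hi' : i < (f j').1) : (f j).2 i = (f j').2 i := by
  rcases lt_trichotomy j j' with h | rfl | h
  · exact ((hf h).2 hi).symm
  · rfl
  · exact (hf h).2 hi'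

variable [WellFoundedLT K] [Nonempty K]

attribute [local instance]
  WellFoundedLT.toOrderBot WellFoundedLT.conditionallyCompleteLinearOrderBot

open Classical in
noncomputable def glue (f : ι → K × (K → K)) : K × (K → K) :=
  (⨆ j, (f j).1,
    fun i => if h : ∃ j, i < (f j).1 then (f h.choose).2 i else Classical.arbitrary K)

variable {f : ι → K × (K → K)} (hbdd : BddAbove (range fun j => (f j).1))
include hbdd

theorem exists_lt_fst_of_lt_glue {i : K} (hi : i < (glue f).1) : ∃ j, i < (f j).1 :=
  (lt_ciSup_iff' hbdd).1 hi

theorem passesThrough_glue {w : K → K} (hw : ∀ j, PassesThrough w (f j)) :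
    PassesThrough w (glue f) := by
  intro i hi
  have h := exists_lt_fst_of_lt_glue hbdd hi
  simp only [glue, dif_pos h]
  exact hw _ h.choose_spec

variable [LinearOrder ι] (hf : IsNodeChain f) (hmax : ∀ j : ι, ∃ j', j < j')
include hf hmax

theorem glue_properlyExtends (j : ι) : ProperlyExtends (glue f) (f j) := by
  obtain ⟨j', hj'⟩ := hmax j
  refine ⟨(hf hj').1.trans_le (le_ciSup hbdd j'), fun i hi => ?_⟩
  have h : ∃ j, i < (f j).1 := ⟨j, hi⟩
  simp only [glue, dif_pos h]
  exact hf.apply_eq h.choose_spec hi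

theorem glue_mem [Nonempty ι] {S : Set (Nd K K)} (hT : IsSubtree K S) (hsc : Superclosed K S)
    (hmem : ∀ j, xRes K (f j).2 (f j).1 ∈ S) : xRes K (glue f).2 (glue f).1 ∈ S := by
  have hlt := glue_properlyExtends hbdd hf hmax
  refine hsc _ ⟨⟨_, (hlt (Classical.arbitrary ι)).1⟩, fun e he => ?_⟩ fun e he => ?_
  · obtain ⟨j, hj⟩ := exists_lt_fst_of_lt_glue hbdd he
    exact ⟨_, hj, (hlt j).1⟩
  · obtain ⟨j, hj⟩ := exists_lt_fst_of_lt_glue hbdd he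
    show xRes K (glue f).2 e ∈ S
    rw [xRes_congr ((hlt j).2.mono (Iio_subset_Iio hj.le))]
    exact hT _ (hmem j) e hj.le

end Chains

section Approximations

variable {K : Type u} [LinearOrder K] [WellFoundedLT K] [SuccOrder K] [Nonempty K]
  {S : Set (Nd K K)}

variable (S) in
/-- The node of `S` coded by `u↾b`. -/
noncomputable def approx (u : K → K) (b : K) : K × (K → K) :=
  SuccOrder.limitRecOn b (motive := fun _ => K × (K → K))
    (fun b _ => (b, fun _ => Classical.arbitrary K))
    (fun c _ p => branchStep S p.1 p.2 (u c))
    (fun b _ IH => glue fun c : Iio b => IH c c.2)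

variable {u : K → K}

theorem approx_of_isMin {b : K} (hb : IsMin b) :
    approx S u b = (b, fun _ => Classical.arbitrary K) :=
  SuccOrder.limitRecOn_isMin _ _ _ hb

theorem approx_of_isSuccLimit {b : K} (hb : IsSuccLimit b) :
    approx S u b = glue fun c : Iio b => approx S u c :=
  SuccOrder.limitRecOn_of_isSuccLimit _ _ _ hb

variable [NoMaxOrder K]

theorem approx_succ (c : K) :
    approx S u (succ c) = branchStep S (approx S u c).1 (approx S u c).2 (u c) :=
  SuccOrder.limitRecOn_succ _ _ _ c

theorem approx_congr {u' : K → K} {b : K} (h : EqOn u u' (Iio b)) :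
    approx S u b = approx S u' b := by
  induction b using SuccOrder.limitRecOn with
  | isMin b hb => rw [approx_of_isMin hb, approx_of_isMin hb]
  | succ c _ IH =>
    rw [approx_succ, approx_succ, IH (h.mono (Iio_subset_Iio (le_succ c))), h (lt_succ c)]
  | isSuccLimit b hb IH =>
    rw [approx_of_isSuccLimit hb, approx_of_isSuccLimit hb]
    congr 1
    exact funext fun c => IH c c.2 (h.mono (Iio_subset_Iio c.2.le))

theorem bddAbove_approx_fst (hreg : (#K).IsRegular) (hseg : ∀ b : K, #(Iio b) < #K) (b : K) :
    BddAbove (range fun c : Iio b => (approx S u c).1) :=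
  bddAbove_of_mk_lt hreg hseg (mk_range_le.trans_lt (hseg b))

variable (hreg : (#K).IsRegular) (hseg : ∀ b : K, #(Iio b) < #K)
include hreg hseg

theorem isNodeChain_approx : IsNodeChain (approx S u) := by
  intro c b hcb
  induction b using SuccOrder.limitRecOn generalizing c with
  | isMin b hb => exact absurd hcb hb.not_lt
  | succ b _ IH =>
    rw [approx_succ]
    have hstep := branchStep_properlyExtends (S := S) (l := (approx S u b).1)
      (z := (approx S u b).2) (u b)
    rcases (lt_succ_iff.1 hcb).lt_or_eq with hcb | rfl
    · exact hstep.trans (IH hcb)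
    · exact hstep
  | isSuccLimit b hb IH =>
    rw [approx_of_isSuccLimit hb]
    exact glue_properlyExtends (bddAbove_approx_fst hreg hseg b) (fun c c' h => IH c' c'.2 h)
      (fun c => ⟨⟨succ c, hb.succ_lt c.2⟩, lt_succ c.1⟩) ⟨c, hcb⟩

theorem strictMono_approx_fst : StrictMono fun b => (approx S u b).1 :=
  fun _ _ h => (isNodeChain_approx hreg hseg h).1

theorem self_le_approx_fst (b : K) : b ≤ (approx S u b).1 :=
  (strictMono_approx_fst hreg hseg).id_le b

theorem approx_mem (hS : MillerTree K S) (b : K) :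
    xRes K (approx S u b).2 (approx S u b).1 ∈ S := by
  induction b using SuccOrder.limitRecOn with
  | isMin b hb =>
    obtain ⟨p, hp⟩ := hS.1
    have hbp : b ≤ p.1 := (le_total b p.1).elim id fun h => hb h
    rw [approx_of_isMin hb]
    convert hS.2.1 p hp b hbp using 1
    exact congrArg (Sigma.mk b) (funext fun i => absurd i.2 hb.not_lt)
  | succ c _ IH =>
    rw [approx_succ]
    exact branchStep_mem (hS.exists_isSplittingStem hreg.aleph0_le IH) _
  | isSuccLimit b hb IH =>
    rw [approx_of_isSuccLimit hb]
    have : Nonempty (Iio b) := let ⟨c, hc⟩ := not_isMin_iff.1 hb.not_isMin; ⟨⟨c, hc⟩⟩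
    exact glue_mem (bddAbove_approx_fst hreg hseg b)
      (fun c c' h => isNodeChain_approx hreg hseg (Subtype.mk_lt_mk.1 h))
      (fun c => ⟨⟨succ c, hb.succ_lt c.2⟩, lt_succ c.1⟩) hS.2.1 hS.2.2.1 fun c => IH c c.2

end Approximations

section Coding

variable {K : Type u} [LinearOrder K] [WellFoundedLT K] [SuccOrder K] [NoMaxOrder K]
  [Nonempty K] {S : Set (Nd K K)}

variable (S) in
noncomputable def toBody (u : K → K) : K → K := fun i => (approx S u (succ i)).2 i

variable (S) in
/-- `fromBody S w c` is the index of the piece that `w` enters at stage `succ c`. -/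
noncomputable def fromBody (w : K → K) : K → K :=
  wellFounded_lt.fix fun c IH => Classical.epsilon fun a =>
    PassesThrough w (approx S (fun i => if h : i < c then IH i h else a) (succ c))

theorem passesThrough_approx_fromBody_succ {w : K → K} {c : K}
    (h : ∃ a, PassesThrough w (approx S (update (fromBody S w) c a) (succ c))) :
    PassesThrough w (approx S (fromBody S w) (succ c)) := by
  have key : ∀ a, EqOn (update (fromBody S w) c a) (fun i => if i < c then fromBody S w i else a)
      (Iio (succ c)) := fun a i hi => by
    dsimp only
    rcases (lt_succ_iff.1 hi).lt_or_eq with hic | rfl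
    · rw [update_of_ne hic.ne, if_pos hic]
    · rw [update_self, if_neg (lt_irrefl i)]
  have hspec := Classical.epsilon_spec (h.imp fun a ha => approx_congr (key a) ▸ ha)
  have hc : fromBody S w c = Classical.epsilon fun a =>
      PassesThrough w (approx S (fun i => if i < c then fromBody S w i else a) (succ c)) :=
    wellFounded_lt.fix_eq _ c
  rw [← hc, ← approx_congr (key _), update_eq_self] at hspec
  exact hspec

theorem continuous_toBody : Continuous (toBody S) :=
  continuous_bTop_of_eventually_eqOn fun u b => (eventually_eqOn_Iio u b).mono fun _ hu i hi =>
    congrArg (fun p => p.2 i) (approx_congr (hu.mono (Iio_subset_Iio (succ_le_of_lt hi))))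

variable (hreg : (#K).IsRegular) (hseg : ∀ b : K, #(Iio b) < #K)
include hreg hseg

theorem passesThrough_approx_toBody (u : K → K) (b : K) :
    PassesThrough (toBody S u) (approx S u b) := fun i hi =>
  (isNodeChain_approx hreg hseg).apply_eq
    ((lt_succ i).trans_le (self_le_approx_fst hreg hseg _)) hi

theorem eq_toBody_of_passesThrough {w u : K → K} (h : ∀ b, PassesThrough w (approx S u b)) :
    w = toBody S u :=
  funext fun i => h (succ i) ((lt_succ i).trans_le (self_le_approx_fst hreg hseg _))

variable (hS : MillerTree K S)
include hS

theorem toBody_mem (u : K → K) : toBody S u ∈ body K S := fun b => by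
  have hb := self_le_approx_fst hreg hseg (S := S) (u := u) b
  rw [xRes_congr ((passesThrough_approx_toBody hreg hseg u b).mono (Iio_subset_Iio hb))]
  exact hS.2.1 _ (approx_mem hreg hseg hS b) b hb

theorem eqOn_of_passesThrough_approx_succ {w u u' : K → K} {b : K}
    (h : ∀ c < b,
      PassesThrough w (approx S u (succ c)) ∧ PassesThrough w (approx S u' (succ c))) :
    EqOn u u' (Iio b) := by
  intro c hc
  induction c using WellFoundedLT.induction with
  | _ c IH =>
    obtain ⟨h₁, h₂⟩ := h c hc
    rw [approx_succ, approx_congr fun i hi => IH i hi (hi.trans hc)] at h₁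
    rw [approx_succ] at h₂
    exact eq_of_passesThrough_branchStep
      (hS.exists_isSplittingStem hreg.aleph0_le (approx_mem hreg hseg hS c)) h₁ h₂

theorem passesThrough_approx_fromBody {w : K → K} (hw : w ∈ body K S) (b : K) :
    PassesThrough w (approx S (fromBody S w) b) := by
  induction b using SuccOrder.limitRecOn with
  | isMin b hb =>
    rw [approx_of_isMin hb]
    exact fun i hi => absurd hi hb.not_lt
  | succ c _ IH =>
    refine passesThrough_approx_fromBody_succ ?_
    obtain ⟨a, ha⟩ := exists_passesThrough_branchStep
      (hS.exists_isSplittingStem hreg.aleph0_le (approx_mem hreg hseg hS c)) hw IH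
    refine ⟨a, ?_⟩
    rwa [approx_succ, approx_congr (eqOn_update_Iio _ _ _), update_self]
  | isSuccLimit b hb IH =>
    rw [approx_of_isSuccLimit hb]
    exact passesThrough_glue (bddAbove_approx_fst hreg hseg b) fun c => IH c c.2

theorem fromBody_toBody (u : K → K) : fromBody S (toBody S u) = u :=
  funext fun c => eqOn_of_passesThrough_approx_succ hreg hseg hS (b := succ c)
    (fun _ _ => ⟨passesThrough_approx_fromBody hreg hseg hS (toBody_mem hreg hseg hS u) _,
      passesThrough_approx_toBody hreg hseg u _⟩) (lt_succ c)

theorem continuous_fromBody : Continuous fun w : body K S => fromBody S w.1 := by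
  refine continuous_bTop_of_eventually_eqOn fun ⟨w, hw⟩ b => ?_
  filter_upwards [(continuous_subtype_val.tendsto _).eventually
    (eventually_eqOn_Iio w (approx S (fromBody S w) b).1)] with ⟨w', hw'⟩ hw'w
  refine eqOn_of_passesThrough_approx_succ hreg hseg hS fun c hc =>
    ⟨passesThrough_approx_fromBody hreg hseg hS hw' _, fun i hi => ?_⟩
  have hle := (strictMono_approx_fst hreg hseg (S := S) (u := fromBody S w)).monotone
    (succ_le_of_lt hc)
  exact (hw'w (hi.trans_le hle)).trans (passesThrough_approx_fromBody hreg hseg hS hw _ hi)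

noncomputable def bodyHomeomorph : (K → K) ≃ₜ body K S where
  toFun u := ⟨toBody S u, toBody_mem hreg hseg hS u⟩
  invFun w := fromBody S w.1
  left_inv := fromBody_toBody hreg hseg hS
  right_inv w := Subtype.ext
    (eq_toBody_of_passesThrough hreg hseg (passesThrough_approx_fromBody hreg hseg hS w.2)).symm
  continuous_toFun := continuous_toBody.subtype_mk _
  continuous_invFun := continuous_fromBody hreg hseg hS

end Coding

/-- The body of a κ-Miller tree is a closed subset of `K → K` homeomorphic to
the whole generalized Baire space. -/
theorem millerTree_body_closed_homeoBaire (K : Type u) [LinearOrder K] [WellFoundedLT K]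
    (hseg : ∀ b : K, #(Set.Iio b) < #K)
    (hunc : ℵ₀ < #K) (hpow : Cardinal.powerlt #K #K = #K)
    (S : Set (Nd K K)) (hS : MillerTree K S) :
    IsClosed[bTop K K] (body K S) ∧ HomeoToBaire K (body K S) := by
  let _ : SuccOrder K := SuccOrder.ofLinearWellFoundedLT K
  have := noMaxOrder_of_mk_Iio_lt hunc.le hseg
  have : Nonempty K := mk_ne_zero_iff.1 (aleph0_pos.trans hunc).ne'
  have hreg := isRegular_of_powerlt_self hunc.le hpow
  exact ⟨isClosed_body S, ⟨(bodyHomeomorph hreg hseg hS).symm⟩⟩
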